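/- Fix n ≥ 1, N ≥ 1, grid spacing h > 0, time step τ > 0, real parameters p₁ ≠ 0 and p₂, and a constant λ₀ ∈ ℝ with p₂·λ₀ ≥ 0. Let C₁, C₁′, C₂, C₂′ : (Fin n → ZMod N) → ℝ be periodic grid functions satisfying the discrete constraint-propagation identities of the structure-preserving scheme with constant gauge field λ ≡ λ₀: (C₁′ − C₁)/τ = (1/2)(C₂′ + C₂) and (C₂′ − C₂)/τ = −(p₂λ₀/2)(C₁′ + C₁) + (1/2)Σᵢ δᵢδᵢ(C₁′ + C₁). If C₁ = 0 and C₂ = 0, then C₁′ = 0 and C₂′ = 0. -/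
import Mathlib

open scoped BigOperators

/-- The `i`-th standard unit vector of the periodic grid `(ZMod N)ⁿ`. -/
def gridEP {n N : ℕ} (i : Fin n) : Fin n → ZMod N := fun j => if j = i then 1 else 0

/-- Periodic first-order central difference in direction `i` with grid spacing `h`:
`(δᵢf)(k) = (f(k + eᵢ) − f(k − eᵢ))/(2h)`, addition componentwise in `ZMod N`. -/
noncomputable def cdiffP {n N : ℕ} (h : ℝ) (i : Fin n)
    (f : (Fin n → ZMod N) → ℝ) : (Fin n → ZMod N) → ℝ :=
  fun k => (f (k + gridEP i) - f (k - gridEP i)) / (2 * h)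

lemma shift_sum {n N : ℕ} [NeZero N] (F : (Fin n → ZMod N) → ℝ) (a : Fin n → ZMod N) :
    ∑ k, F (k + a) = ∑ k, F k :=
  Fintype.sum_equiv (Equiv.addRight a) _ _ (fun _ => rfl)

lemma sum_mul_cdiff {n N : ℕ} [NeZero N] (h : ℝ) (i : Fin n)
    (f g : (Fin n → ZMod N) → ℝ) :
    ∑ k, f k * cdiffP h i g k = -∑ k, cdiffP h i f k * g k := by
  have h1 : ∑ k, f k * g (k + gridEP i) = ∑ k, f (k - gridEP i) * g k := by
    have := shift_sum (fun k => f (k - gridEP i) * g k) (gridEP i)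
    simpa using this
  have h2 : ∑ k, f k * g (k - gridEP i) = ∑ k, f (k + gridEP i) * g k := by
    have := shift_sum (fun k => f k * g (k - gridEP i)) (gridEP i)
    simpa using this.symm
  have L : ∑ k, f k * cdiffP h i g k
      = ((∑ k, f k * g (k + gridEP i)) - ∑ k, f k * g (k - gridEP i)) / (2 * h) := by
    rw [← Finset.sum_sub_distrib, Finset.sum_div]
    exact Finset.sum_congr rfl fun k _ => by simp only [cdiffP]; ring
  have R : ∑ k, cdiffP h i f k * g k
      = ((∑ k, f (k + gridEP i) * g k) - ∑ k, f (k - gridEP i) * g k) / (2 * h) := by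
    rw [← Finset.sum_sub_distrib, Finset.sum_div]
    exact Finset.sum_congr rfl fun k _ => by simp only [cdiffP]; ring
  rw [L, R, h1, h2]; ring

/-- The structure-preserving scheme propagates exactly satisfied constraints
exactly: if the discrete constraint-propagation identities hold with a constant
gauge field `lam₀` (with `p₂lam₀ ≥ 0`) and the constraints vanish at one time level,
then they vanish at the next, for any time step `τ > 0`. -/
theorem sps_exact_constraint_conservation {n N : ℕ} (hn : 1 ≤ n) [NeZero N]
    (hN : 1 ≤ N) (h τ : ℝ) (hh : 0 < h) (hτ : 0 < τ)
    (p₁ p₂ : ℝ) (hp₁ : p₁ ≠ 0) (lam₀ : ℝ) (hlam₀ : 0 ≤ p₂ * lam₀)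
    (C₁ C₁' C₂ C₂' : (Fin n → ZMod N) → ℝ)
    (e1 : ∀ k, (C₁' k - C₁ k) / τ = (1 / 2) * (C₂' k + C₂ k))
    (e2 : ∀ k, (C₂' k - C₂ k) / τ =
        -(p₂ * lam₀ / 2) * (C₁' k + C₁ k)
        + (1 / 2) * ∑ i : Fin n, cdiffP h i (cdiffP h i (fun x => C₁' x + C₁ x)) k)
    (hC₁ : C₁ = 0) (hC₂ : C₂ = 0) :
    C₁' = 0 ∧ C₂' = 0 := by
  subst hC₁ hC₂
  simp only [Pi.zero_apply, sub_zero, add_zero] at e1 e2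
  have key : ∀ k, C₂' k = 2 / τ * C₁' k := by
    intro k
    have := e1 k
    field_simp at this ⊢
    linarith
  have e3 : ∀ k, (2 / τ ^ 2 + p₂ * lam₀ / 2) * C₁' k
      = (1 / 2) * ∑ i : Fin n, cdiffP h i (cdiffP h i C₁') k := by
    intro k
    have h2 := e2 k
    rw [key k] at h2
    have hτ2 : τ ^ 2 ≠ 0 := pow_ne_zero 2 hτ.ne'
    field_simp at h2 ⊢
    nlinarith [h2]
  have hsum : (2 / τ ^ 2 + p₂ * lam₀ / 2) * ∑ k, (C₁' k) ^ 2
      = (1 / 2) * ∑ i : Fin n, ∑ k, C₁' k * cdiffP h i (cdiffP h i C₁') k := by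
    rw [Finset.mul_sum]
    rw [show ∑ i : Fin n, ∑ k, C₁' k * cdiffP h i (cdiffP h i C₁') k
        = ∑ k, ∑ i : Fin n, C₁' k * cdiffP h i (cdiffP h i C₁') k from Finset.sum_comm]
    rw [Finset.mul_sum]
    refine Finset.sum_congr rfl fun k _ => ?_
    rw [← Finset.mul_sum]
    have := e3 k
    linear_combination C₁' k * this
  have hneg : (1 / 2) * ∑ i : Fin n, ∑ k, C₁' k * cdiffP h i (cdiffP h i C₁') k ≤ 0 := by
    have : ∀ i : Fin n, ∑ k, C₁' k * cdiffP h i (cdiffP h i C₁') k ≤ 0 := by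
      intro i
      rw [sum_mul_cdiff]
      have : 0 ≤ ∑ k, cdiffP h i C₁' k * cdiffP h i C₁' k :=
        Finset.sum_nonneg fun k _ => mul_self_nonneg _
      linarith
    have : ∑ i : Fin n, ∑ k, C₁' k * cdiffP h i (cdiffP h i C₁') k ≤ 0 :=
      Finset.sum_nonpos (fun i _ => this i)
    linarith
  have hS0 : ∑ k, (C₁' k) ^ 2 = 0 := by
    have hSnn : 0 ≤ ∑ k, (C₁' k) ^ 2 := Finset.sum_nonneg fun k _ => sq_nonneg _
    have hc : 0 < 2 / τ ^ 2 + p₂ * lam₀ / 2 := by positivity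
    nlinarith [hsum, hneg]
  have hC1 : ∀ k, C₁' k = 0 := by
    intro k
    have := (Finset.sum_eq_zero_iff_of_nonneg (fun k _ => sq_nonneg (C₁' k))).mp hS0 k
      (Finset.mem_univ k)
    exact pow_eq_zero_iff (by norm_num) |>.mp this
  refine ⟨funext hC1, funext fun k => ?_⟩
  rw [key k, hC1 k, mul_zero]; rfl
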